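/- arXiv:2603.28953 — 4 statements merged into one kernel-verified Lean document; each statement's English description precedes it below -/
import Mathlib

section
/- Let X be a set of size k ≥ 2, Σ = X ∪ X⁻¹, and s a reduced word. For any reduced words u, v that avoid s as a factor, there exists a reduced word w such that uwv is reduced and avoids s as a factor. (The subshift of bi-infinite reduced words avoiding s is irreducible.) -/
def FreelyReduced {X : Type*} (w : List (X × Bool)) : Prop :=
  List.Chain' (fun a b => a.1 = b.1 → a.2 = b.2) w

/-!
Take `w = cⁿ dⁿ` with `n = |s|`, for letters `c, d` (there are at least four) such that none of
the junctions `u|c`, `c|d`, `d|v` cancels, `c` and `d` differ from the last letter of `s`, and `d`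
differs from its first letter. An occurrence of `s` in `u cⁿ dⁿ v` is too short to meet both
`u cⁿ` and `v`. Inside `u cⁿ dⁿ` but not `u` it would end in `c` or `d`; inside `dⁿ v` but not `v`
it would start with `d`.
-/

namespace List

variable {α : Type*}

theorem infix_append_or_infix_append_of_infix_append_append {s A P B : List α}
    (h : s <:+: A ++ P ++ B) (hs : s.length ≤ P.length + 1) :
    s <:+: A ++ P ∨ s <:+: P ++ B := by
  obtain ⟨a, b, hab⟩ := h
  rw [append_assoc, append_assoc] at hab
  rcases append_eq_append_iff.mp hab with ⟨a', rfl, hsb⟩ | ⟨c', rfl, hPB⟩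
  · rcases eq_or_ne a' [] with rfl | ha'
    · exact .inr ⟨[], b, by simpa using hsb⟩
    left
    rw [← append_assoc] at hsb
    rcases append_eq_append_iff.mp hsb with ⟨e, he, -⟩ | ⟨e, hs', -⟩
    · exact ⟨a, e, by rw [append_assoc, ← he, append_assoc]⟩
    · have : e = [] := by
        have hlen := congrArg length hs'
        have := length_pos_iff.mpr ha'
        simp only [length_append] at hlen
        exact length_eq_zero_iff.mp (by omega)
      subst this
      exact ⟨a, [], by simp [hs']⟩
  · exact .inr ⟨c', b, by simp [hPB]⟩

theorem not_infix_append_replicate {s A : List α} {c : α} (hs : s ≠ [])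
    (hc : s.getLast hs ≠ c) (hA : ¬ s <:+: A) (n : ℕ) : ¬ s <:+: A ++ replicate n c := by
  induction n with
  | zero => simpa using hA
  | succ n ih =>
    rw [replicate_succ', ← append_assoc, infix_concat_iff]
    rintro (⟨t, ht⟩ | h)
    · have := congrArg getLast? ht
      rw [getLast?_append_of_ne_nil _ hs, getLast?_eq_some_getLast hs] at this
      exact hc (by simpa using this)
    · exact ih h

theorem not_infix_replicate_append {s B : List α} {d : α} (hs : s ≠ [])
    (hd : s.head hs ≠ d) (hB : ¬ s <:+: B) (n : ℕ) : ¬ s <:+: replicate n d ++ B := by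
  induction n with
  | zero => simpa using hB
  | succ n ih =>
    rw [replicate_succ, cons_append, infix_cons_iff]
    rintro (⟨t, ht⟩ | h)
    · have := congrArg head? ht
      rw [head?_append_of_ne_nil _ hs, head?_eq_some_head hs] at this
      exact hd (by simpa using this)
    · exact ih h

theorem getLast?_append_replicate (A : List α) {c : α} {n : ℕ} (hn : n ≠ 0) :
    (A ++ replicate n c).getLast? = some c := by
  simp [getLast?_append, getLast?_replicate, hn]

end List

theorem Fintype.exists_ne_ne_forall_ne {α : Type*} [Fintype α] (h : 4 ≤ Fintype.card α)
    (a b : α) (o : Option α) : ∃ x, x ≠ a ∧ x ≠ b ∧ ∀ y ∈ o, x ≠ y := by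
  classical
  open Finset in
  have hcard : #({a, b} ∪ o.toFinset) < #(univ : Finset α) := by
    calc #({a, b} ∪ o.toFinset) ≤ #({a, b} : Finset α) + #o.toFinset := card_union_le _ _
      _ ≤ 2 + 1 := add_le_add card_le_two (by cases o <;> simp)
      _ < #(univ : Finset α) := by rw [card_univ]; omega
  obtain ⟨x, -, hx⟩ := exists_mem_notMem_of_card_lt_card hcard
  simp only [mem_union, mem_insert, mem_singleton, Option.mem_toFinset, not_or] at hx
  exact ⟨x, hx.1.1, hx.1.2, fun y hy h => hx.2 (h ▸ hy)⟩

def letterInv {X : Type*} (a : X × Bool) : X × Bool := (a.1, !a.2)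

theorem letterInv_involutive {X : Type*} : Function.Involutive (letterInv (X := X)) := by
  intro a; simp [letterInv]

namespace FreelyReduced

variable {X : Type*}

theorem replicate (a : X × Bool) (n : ℕ) : FreelyReduced (List.replicate n a) :=
  List.isChain_replicate_of_rel n fun _ => rfl

theorem append {A B : List (X × Bool)} (hA : FreelyReduced A) (hB : FreelyReduced B)
    (h : ∀ a ∈ A.getLast?, ∀ b ∈ B.head?, a ≠ letterInv b) : FreelyReduced (A ++ B) := by
  refine List.IsChain.append hA hB fun a ha b hb hab => ?_
  by_contra hne
  refine h a ha b hb (Prod.ext hab ?_)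
  simpa [letterInv, Bool.eq_not_iff] using hne

theorem append_replicate {A : List (X × Bool)} {c : X × Bool} (hA : FreelyReduced A)
    (hc : ∀ a ∈ A.getLast?, a ≠ letterInv c) (n : ℕ) : FreelyReduced (A ++ List.replicate n c) :=
  hA.append (.replicate c n) fun a ha b hb => by
    obtain ⟨-, rfl⟩ := List.mem_of_mem_head? hb |> List.mem_replicate.mp
    exact hc a ha

end FreelyReduced

theorem stmt7_general {X : Type*} [Fintype X] (hX : 2 ≤ Fintype.card X)
    (s u v : List (X × Bool))
    (hu : FreelyReduced u) (hus : ¬ s <:+: u)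
    (hv : FreelyReduced v) (hvs : ¬ s <:+: v) :
    ∃ w : List (X × Bool), FreelyReduced (u ++ w ++ v) ∧ ¬ s <:+: (u ++ w ++ v) := by
  have hsne : s ≠ [] := by rintro rfl; exact hus u.nil_infix
  have hn : s.length ≠ 0 := by simpa using hsne
  have hcard : 4 ≤ Fintype.card (X × Bool) := by
    rw [Fintype.card_prod, Fintype.card_bool]; omega
  obtain ⟨d, hd_head, hd_last, hd_v⟩ := Fintype.exists_ne_ne_forall_ne hcard
    (s.head hsne) (s.getLast hsne) (v.head?.map letterInv)
  obtain ⟨c, hc_last, hc_d, hc_u⟩ := Fintype.exists_ne_ne_forall_ne hcard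
    (s.getLast hsne) (letterInv d) (u.getLast?.map letterInv)
  refine ⟨List.replicate s.length c ++ List.replicate s.length d, ?_, ?_⟩
  · rw [← List.append_assoc]
    refine ((hu.append_replicate ?_ _).append_replicate ?_ _).append hv ?_
    · exact fun a ha h =>
        hc_u _ (Option.mem_map_of_mem _ ha) (letterInv_involutive.eq_iff.mpr h).symm
    · simpa only [List.getLast?_append_replicate _ hn, Option.mem_some_iff, forall_eq'] using hc_d
    · simpa only [List.getLast?_append_replicate _ hn, Option.mem_some_iff, forall_eq'] using
        fun b hb => hd_v _ (Option.mem_map_of_mem _ hb)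
  · rw [← List.append_assoc]
    intro h
    rcases List.infix_append_or_infix_append_of_infix_append_append h (by simp) with h | h
    · exact List.not_infix_append_replicate hsne hd_last.symm
        (List.not_infix_append_replicate hsne hc_last.symm hus _) _ h
    · exact List.not_infix_replicate_append hsne hd_head.symm hvs _ h

/-- Irreducibility of the subshift of reduced words avoiding a reduced word `s`:
given reduced `u, v` avoiding `s`, there is `w` with `u ++ w ++ v` reduced and
avoiding `s`. -/
theorem stmt7 {X : Type*} [Fintype X] (hX : 2 ≤ Fintype.card X)
    (s u v : List (X × Bool)) (hs : FreelyReduced s)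
    (hu : FreelyReduced u) (hus : ¬ s <:+: u)
    (hv : FreelyReduced v) (hvs : ¬ s <:+: v) :
    ∃ w : List (X × Bool), FreelyReduced (u ++ w ++ v) ∧ ¬ s <:+: (u ++ w ++ v) :=
  stmt7_general hX s u v hu hus hv hvs
end

section
/- Let k ≥ 2, X = {x₁,...,x_k}, Σ = X ∪ X⁻¹, and L ⊆ Red(X). If there is a reduced word s such that no word of L contains s as a factor (i.e., Σ* s Σ* ∩ L = ∅), then D(L | Red(X)) = lim_{n→∞} |Σⁿ ∩ L| / |Σⁿ ∩ Red(X)| = 0. -/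
open Filter Topology

/-- The language of freely reduced words over `Σ = X ∪ X⁻¹`. -/
def Red (X : Type*) : Set (List (X × Bool)) := {w | FreelyReduced w}

noncomputable def sphereCount {A : Type*} (L : Set (List A)) (n : ℕ) : ℕ :=
  Nat.card {w : List A // w ∈ L ∧ w.length = n}

noncomputable def relRatio {A : Type*} (L M : Set (List A)) (n : ℕ) : ℝ :=
  (sphereCount L n : ℝ) / (sphereCount M n : ℝ)

/-!
Let `A` be the set of reduced words avoiding `s` and `D = 2k - 1`. There are at least `D ^ n`
reduced words of length `n`. A nonempty reduced word has at most `D` reduced one-letter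
continuations, so `a n = |A_(n+1)| / D ^ (n+1)` is antitone. Among the at most `D ^ (|s|+1)`
reduced continuations of length `|s| + 1` of a word of `A`, at least `2k - 2` have the form
`c :: s` and leave `A`, so `a (n + |s| + 1) ≤ θ * a n` for some `θ < 1`. An antitone nonnegative
sequence contracted by `θ < 1` along a fixed shift tends to `0`, and since `L ⊆ A` the relative
density of `L` at length `n + 1` is at most `a n`.
-/

open Finset

noncomputable section

namespace WordCounting

open scoped Classical

section Slices

variable {α : Type*}

def leftQuotient (u : List α) (M : Set (List α)) : Set (List α) := {e | u ++ e ∈ M}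

@[simp]
lemma mem_leftQuotient {u e : List α} {M : Set (List α)} :
    e ∈ leftQuotient u M ↔ u ++ e ∈ M := Iff.rfl

lemma leftQuotient_leftQuotient (u v : List α) (M : Set (List α)) :
    leftQuotient v (leftQuotient u M) = leftQuotient (u ++ v) M := by
  ext e; simp

def IsPrefixClosed (M : Set (List α)) : Prop :=
  ∀ ⦃w⦄, w ∈ M → ∀ ⦃v⦄, v <+: w → v ∈ M

lemma IsPrefixClosed.leftQuotient {M : Set (List α)} (hM : IsPrefixClosed M) (u : List α) :
    IsPrefixClosed (leftQuotient u M) :=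
  fun _ hw _ hv => hM hw ((List.prefix_append_right_inj u).2 hv)

variable [Fintype α]

variable (α) in
def wordsOfLength (n : ℕ) : Finset (List α) :=
  (univ : Finset (List.Vector α n)).map ⟨List.Vector.toList, List.Vector.toList_injective⟩

@[simp]
lemma mem_wordsOfLength {n : ℕ} {w : List α} : w ∈ wordsOfLength α n ↔ w.length = n := by
  rw [wordsOfLength, Finset.mem_map]
  exact ⟨fun ⟨v, _, hv⟩ => hv ▸ v.toList_length,
    fun h => ⟨⟨w, h⟩, mem_univ _, rfl⟩⟩

def slice (M : Set (List α)) (n : ℕ) : Finset (List α) :=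
  (wordsOfLength α n).filter (· ∈ M)

@[simp]
lemma mem_slice {M : Set (List α)} {n : ℕ} {w : List α} :
    w ∈ slice M n ↔ w ∈ M ∧ w.length = n := by
  simp [slice, and_comm]

lemma sphereCount_eq_card_slice (M : Set (List α)) (n : ℕ) :
    sphereCount M n = #(slice M n) := by
  rw [sphereCount, ← Nat.card_eq_finsetCard]
  exact Nat.card_congr (Equiv.subtypeEquivRight fun w => mem_slice.symm)

lemma slice_mono {M M' : Set (List α)} (h : M ⊆ M') (n : ℕ) : slice M n ⊆ slice M' n :=
  fun _ hw => mem_slice.2 ⟨h (mem_slice.1 hw).1, (mem_slice.1 hw).2⟩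

lemma card_slice_leftQuotient_one (u : List α) (M : Set (List α)) :
    #(slice (leftQuotient u M) 1) = #(univ.filter fun c => u ++ [c] ∈ M) := by
  rw [← card_image_of_injective (univ.filter fun c => u ++ [c] ∈ M) List.singleton_injective]
  refine congrArg card (ext fun e => ?_)
  match e with
  | [] | _ :: _ :: _ => simp
  | [c] => simp

lemma card_slice_zero_le (M : Set (List α)) : #(slice M 0) ≤ 1 :=
  card_le_one.2 fun v hv w hw => by
    rw [List.length_eq_zero_iff.1 (mem_slice.1 hv).2, List.length_eq_zero_iff.1 (mem_slice.1 hw).2]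

lemma slice_add {M : Set (List α)} (hM : IsPrefixClosed M) (n t : ℕ) :
    slice M (n + t) =
      (slice M n).biUnion fun u => (slice (leftQuotient u M) t).image (u ++ ·) := by
  ext w
  simp only [mem_slice, mem_biUnion, mem_image, mem_leftQuotient]
  constructor
  · rintro ⟨hw, hlen⟩
    refine ⟨w.take n, ⟨hM hw (w.take_prefix n), by simp [hlen]⟩, w.drop n, ?_,
      w.take_append_drop n⟩
    exact ⟨by rwa [w.take_append_drop n], by simp [hlen]⟩
  · rintro ⟨u, ⟨-, rfl⟩, e, ⟨he, rfl⟩, rfl⟩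
    exact ⟨he, List.length_append⟩

lemma card_slice_add {M : Set (List α)} (hM : IsPrefixClosed M) (n t : ℕ) :
    #(slice M (n + t)) = ∑ u ∈ slice M n, #(slice (leftQuotient u M) t) := by
  rw [slice_add hM, card_biUnion]
  · exact sum_congr rfl fun u _ => card_image_of_injective _ (List.append_right_injective u)
  · intro u hu v hv huv
    refine disjoint_left.2 fun w hwu hwv => huv ?_
    obtain ⟨e, -, rfl⟩ := mem_image.1 hwu
    obtain ⟨e', -, he⟩ := mem_image.1 hwv
    exact (List.append_inj he ((mem_slice.1 hv).2.trans (mem_slice.1 hu).2.symm)).1.symm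
lemma card_slice_add_le {M : Set (List α)} (hM : IsPrefixClosed M) {n t B : ℕ}
    (hB : ∀ u ∈ slice M n, #(slice (leftQuotient u M) t) ≤ B) :
    #(slice M (n + t)) ≤ B * #(slice M n) := by
  rw [card_slice_add hM, mul_comm, ← smul_eq_mul]
  exact sum_le_card_nsmul _ _ _ hB

lemma le_card_slice_add {M : Set (List α)} (hM : IsPrefixClosed M) {n t B : ℕ}
    (hB : ∀ u ∈ slice M n, B ≤ #(slice (leftQuotient u M) t)) :
    B * #(slice M n) ≤ #(slice M (n + t)) := by
  rw [card_slice_add hM, mul_comm, ← smul_eq_mul]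
  exact card_nsmul_le_sum _ _ _ hB

end Slices

lemma tendsto_zero_of_antitone_of_le_mul {a : ℕ → ℝ} (h0 : ∀ n, 0 ≤ a n) (ha : Antitone a)
    {θ : ℝ} (hθ : θ < 1) (p : ℕ) (hp : ∀ n, a (n + p) ≤ θ * a n) :
    Tendsto a atTop (𝓝 0) := by
  have hlim := tendsto_atTop_ciInf ha ⟨0, by rintro _ ⟨n, rfl⟩; exact h0 n⟩
  have hnonneg : 0 ≤ ⨅ n, a n := le_ciInf h0
  have hcontract : ⨅ n, a n ≤ θ * ⨅ n, a n :=
    le_of_tendsto_of_tendsto' (hlim.comp (tendsto_add_atTop_nat p)) (hlim.const_mul θ) hp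
  rwa [show ⨅ n, a n = 0 by nlinarith] at hlim

lemma cast_div_pow_add_le {x y c D : ℕ} (hD : 0 < D) (h : x ≤ c * y) (m k : ℕ) :
    (x : ℝ) / D ^ (m + k) ≤ c / D ^ k * (y / D ^ m) := by
  rw [div_mul_div_comm, ← pow_add, add_comm k]
  exact div_le_div_of_nonneg_right (by exact_mod_cast h) (by positivity)

section ReducedWords

variable {X : Type*}

def letterInv (a : X × Bool) : X × Bool := (a.1, !a.2)

lemma rel_iff_ne_letterInv {a b : X × Bool} : (a.1 = b.1 → a.2 = b.2) ↔ b ≠ letterInv a := by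
  obtain ⟨x, u⟩ := a; obtain ⟨y, v⟩ := b
  cases u <;> cases v <;> simp [letterInv, eq_comm]

lemma rel_iff_ne_letterInv' {a b : X × Bool} :
    (a.1 = b.1 → a.2 = b.2) ↔ a ≠ letterInv b := by
  obtain ⟨x, u⟩ := a; obtain ⟨y, v⟩ := b
  cases u <;> cases v <;> simp [letterInv]

lemma isPrefixClosed_red : IsPrefixClosed (Red X) :=
  fun _ hw _ hv => List.IsChain.prefix hw hv

lemma freelyReduced_append_cons {u s : List (X × Bool)} {c : X × Bool}
    (hu : FreelyReduced u) (hs : FreelyReduced s)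
    (hcu : ∀ x ∈ u.getLast?, c ≠ letterInv x) (hcs : ∀ y ∈ s.head?, c ≠ letterInv y) :
    FreelyReduced (u ++ c :: s) := by
  rw [FreelyReduced, List.Chain', List.isChain_append, List.isChain_cons]
  refine ⟨hu, ⟨fun y hy => rel_iff_ne_letterInv'.2 (hcs y hy), hs⟩, fun x hx y hy => ?_⟩
  obtain rfl : y = c := by simpa using hy.symm
  exact rel_iff_ne_letterInv.2 (hcu x hx)

def avoiding (s : List (X × Bool)) : Set (List (X × Bool)) :=
  {w | FreelyReduced w ∧ ¬ s <:+: w}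

lemma avoiding_subset_red (s : List (X × Bool)) : avoiding s ⊆ Red X := fun _ hw => hw.1

lemma isPrefixClosed_avoiding (s : List (X × Bool)) : IsPrefixClosed (avoiding s) :=
  fun _ hw _ hv => ⟨isPrefixClosed_red hw.1 hv, fun hs => hw.2 (hs.trans hv.isInfix)⟩

variable [Fintype X]

lemma card_sub_two_le_card_filter_freelyReduced {u s : List (X × Bool)}
    (hu : FreelyReduced u) (hs : FreelyReduced s) :
    Fintype.card (X × Bool) - (#(u.getLast?.toFinset) + #(s.head?.toFinset))
      ≤ #(univ.filter fun c => FreelyReduced (u ++ c :: s)) := by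
  have hbad : univ.filter (fun c => ¬ FreelyReduced (u ++ c :: s)) ⊆
      (u.getLast?.map letterInv).toFinset ∪ (s.head?.map letterInv).toFinset := by
    intro c hc
    by_contra hcb
    refine (mem_filter.1 hc).2 (freelyReduced_append_cons hu hs (fun x hx h => hcb ?_)
      (fun y hy h => hcb ?_))
    · exact mem_union_left _ (Option.mem_toFinset.2 (h ▸ Option.mem_map_of_mem _ hx))
    · exact mem_union_right _ (Option.mem_toFinset.2 (h ▸ Option.mem_map_of_mem _ hy))
  have hcard := (card_le_card hbad).trans ((card_union_le _ _).trans
    (by cases u.getLast? <;> cases s.head? <;> simp) :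
      _ ≤ #(u.getLast?.toFinset) + #(s.head?.toFinset))
  have htotal := card_filter_add_card_filter_not
    (s := (univ : Finset (X × Bool))) fun c => FreelyReduced (u ++ c :: s)
  rw [card_univ] at htotal
  omega

lemma card_sub_one_le_card_slice_one_red {u : List (X × Bool)} (hu : u ∈ Red X) :
    Fintype.card (X × Bool) - 1 ≤ #(slice (leftQuotient u (Red X)) 1) := by
  rw [card_slice_leftQuotient_one]
  refine le_trans ?_ (card_sub_two_le_card_filter_freelyReduced hu (s := []) List.isChain_nil)
  rw [Option.card_toFinset]
  cases u.getLast? <;> simp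

lemma card_slice_one_red_le {u : List (X × Bool)} (hu : u ≠ []) :
    #(slice (leftQuotient u (Red X)) 1) ≤ Fintype.card (X × Bool) - 1 := by
  rw [card_slice_leftQuotient_one, ← card_univ,
    ← card_erase_of_mem (mem_univ (letterInv (u.getLast hu)))]
  refine card_le_card fun c hc => mem_erase.2 ⟨?_, mem_univ c⟩
  have hred : FreelyReduced (u ++ [c]) := (mem_filter.1 hc).2
  rw [FreelyReduced, List.Chain', List.isChain_append] at hred
  exact rel_iff_ne_letterInv.1 (hred.2.2 _ (List.getLast?_eq_some_getLast hu) c rfl)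

lemma card_slice_red_le {u : List (X × Bool)} (hu : u ≠ []) (t : ℕ) :
    #(slice (leftQuotient u (Red X)) t) ≤ (Fintype.card (X × Bool) - 1) ^ t := by
  induction t with
  | zero => exact card_slice_zero_le _
  | succ t ih =>
    refine (card_slice_add_le (isPrefixClosed_red.leftQuotient u) fun e _ => ?_).trans
      (by rw [pow_succ']; exact Nat.mul_le_mul_left _ ih)
    rw [leftQuotient_leftQuotient]
    exact card_slice_one_red_le (by simp [hu])

lemma pow_le_card_slice_red (n : ℕ) :
    (Fintype.card (X × Bool) - 1) ^ n ≤ #(slice (Red X) n) := by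
  induction n with
  | zero => exact card_pos.2 ⟨[], mem_slice.2 ⟨List.isChain_nil, rfl⟩⟩
  | succ n ih =>
    refine le_trans (by rw [pow_succ']; exact Nat.mul_le_mul_left _ ih)
      (le_card_slice_add isPrefixClosed_red fun u hu => ?_)
    exact card_sub_one_le_card_slice_one_red (mem_slice.1 hu).1

lemma card_slice_avoiding_one_le {s u : List (X × Bool)} (hu : u ≠ []) :
    #(slice (leftQuotient u (avoiding s)) 1) ≤ Fintype.card (X × Bool) - 1 :=
  (card_le_card (slice_mono (fun _ he => he.1) 1)).trans (card_slice_one_red_le hu)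

/-- Among the reduced continuations of `u` of length `|s| + 1`, the words `c :: s` are forbidden,
and all but at most two letters `c` make `u ++ c :: s` reduced. -/
lemma card_slice_avoiding_add_card_sub_two_le {s u : List (X × Bool)} (hs : FreelyReduced s)
    (hu : u ∈ Red X) (hu0 : u ≠ []) :
    #(slice (leftQuotient u (avoiding s)) (s.length + 1)) + (Fintype.card (X × Bool) - 2)
      ≤ (Fintype.card (X × Bool) - 1) ^ (s.length + 1) := by
  set C := univ.filter fun c => FreelyReduced (u ++ c :: s)
  have hC : Fintype.card (X × Bool) - 2 ≤ #(C.image (· :: s)) := by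
    rw [card_image_of_injective _ fun _ _ h => List.head_eq_of_cons_eq h]
    refine le_trans ?_ (card_sub_two_le_card_filter_freelyReduced hu hs)
    rw [Option.card_toFinset, Option.card_toFinset]
    cases u.getLast? <;> cases s.head? <;> simp <;> omega
  have hdisj :
      Disjoint (slice (leftQuotient u (avoiding s)) (s.length + 1)) (C.image (· :: s)) := by
    refine disjoint_left.2 fun e he heC => ?_
    obtain ⟨c, -, rfl⟩ := mem_image.1 heC
    exact (mem_slice.1 he).1.2 ((List.suffix_cons c s).trans (List.suffix_append u _)).isInfix
  have hsub : slice (leftQuotient u (avoiding s)) (s.length + 1) ∪ C.image (· :: s) ⊆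
      slice (leftQuotient u (Red X)) (s.length + 1) := by
    refine union_subset (slice_mono (fun _ he => he.1) _) fun e heC => ?_
    obtain ⟨c, hc, rfl⟩ := mem_image.1 heC
    exact mem_slice.2 ⟨(mem_filter.1 hc).2, rfl⟩
  calc _ ≤ #(slice (leftQuotient u (avoiding s)) (s.length + 1) ∪ C.image (· :: s)) := by
        rw [card_union_of_disjoint hdisj]; omega
    _ ≤ _ := (card_le_card hsub).trans (card_slice_red_le hu0 _)

theorem tendsto_card_slice_avoiding_div_pow (hX : 3 ≤ Fintype.card (X × Bool))
    {s : List (X × Bool)} (hs : FreelyReduced s) :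
    Tendsto (fun n => (#(slice (avoiding s) (n + 1)) : ℝ) /
      (Fintype.card (X × Bool) - 1 : ℕ) ^ (n + 1)) atTop (𝓝 0) := by
  set D := Fintype.card (X × Bool) - 1
  set K := Fintype.card (X × Bool) - 2
  set p := s.length + 1
  have hD : 0 < D := by omega
  have hne : ∀ {n}, ∀ u ∈ slice (avoiding s) (n + 1), u ≠ [] := fun u hu h => by
    simp [h] at hu
  have hstep (n : ℕ) : #(slice (avoiding s) (n + 1 + 1)) ≤ D * #(slice (avoiding s) (n + 1)) :=
    card_slice_add_le (isPrefixClosed_avoiding s) fun u hu => card_slice_avoiding_one_le (hne u hu)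
  have hblock (n : ℕ) :
      #(slice (avoiding s) (n + 1 + p)) ≤ (D ^ p - K) * #(slice (avoiding s) (n + 1)) :=
    card_slice_add_le (isPrefixClosed_avoiding s) fun u hu =>
      Nat.le_sub_of_add_le (card_slice_avoiding_add_card_sub_two_le hs
        (avoiding_subset_red s (mem_slice.1 hu).1) (hne u hu))
  refine tendsto_zero_of_antitone_of_le_mul (fun n => by positivity)
    (antitone_nat_of_succ_le fun n => ?_) (θ := (D ^ p - K : ℕ) / (D : ℝ) ^ p) ?_ p fun n => ?_
  · have hD' : (D : ℝ) ≠ 0 := by exact_mod_cast hD.ne'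
    simpa [div_self hD'] using cast_div_pow_add_le hD (hstep n) (n + 1) 1
  · rw [div_lt_one (by positivity)]
    exact_mod_cast Nat.sub_lt (by positivity) (by omega)
  · rw [show n + p + 1 = n + 1 + p by omega]
    exact cast_div_pow_add_le hD (hblock n) (n + 1) p

end ReducedWords

end WordCounting

end

open WordCounting in
/-- Infinite monkey theorem for reduced words: if some reduced word `s` never occurs
as a factor of a word in `L ⊆ Red(X)`, then `D(L | Red(X)) = 0`. -/
theorem stmt8 {X : Type*} [Fintype X] (hX : 2 ≤ Fintype.card X)
    (L : Set (List (X × Bool))) (hL : L ⊆ Red X)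
    (s : List (X × Bool)) (hs : FreelyReduced s)
    (havoid : ∀ w ∈ L, ¬ s <:+: w) :
    Filter.Tendsto (relRatio L (Red X)) Filter.atTop (nhds 0) := by
  have hcard : 3 ≤ Fintype.card (X × Bool) := by
    rw [Fintype.card_prod, Fintype.card_bool]; omega
  rw [← tendsto_add_atTop_iff_nat 1]
  refine squeeze_zero (fun n => div_nonneg (Nat.cast_nonneg _) (Nat.cast_nonneg _)) (fun n => ?_)
    (tendsto_card_slice_avoiding_div_pow hcard hs)
  have hLA : L ⊆ avoiding s := fun w hw => ⟨hL hw, havoid w hw⟩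
  have hpos : (0 : ℝ) < ((Fintype.card (X × Bool) - 1 : ℕ) : ℝ) ^ (n + 1) := by
    have : 0 < Fintype.card (X × Bool) - 1 := by omega
    positivity
  rw [relRatio, sphereCount_eq_card_slice, sphereCount_eq_card_slice]
  exact div_le_div₀ (Nat.cast_nonneg _) (Nat.cast_le.2 (card_le_card (slice_mono hLA _))) hpos
    (by exact_mod_cast pow_le_card_slice_red (n + 1))
end

section
/- Let L ⊆ Red(X) be a regular language of reduced words (|X| ≥ 2) with D_sup(L | Red(X)) = 0, and let N = {w ∈ Red(X) : Σ* w Σ* ∩ L ≠ ∅} be the set of reduced factors of words in L. Then D_sup(N | Red(X)) = 0. -/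
open Filter Topology

def RegularLang {A : Type*} (L : Set (List A)) : Prop :=
  ∃ (σ : Type) (_ : Fintype σ) (M : DFA A σ), M.accepts = L

/-!
Let `L` be accepted by a DFA with `C` states. Cutting loops out of the context of a factor `w`
of a word of `L` gives a word `p ++ w ++ q ∈ L` with `|p|, |q| ≤ C`, and `w` is recovered from
`p ++ w ++ q` and `|p|`. Hence `|N ∩ Σⁿ| ≤ (C + 1) ∑_{i ≤ 2C} |L ∩ Σⁿ⁺ⁱ|`. Since deleting the
first letter maps `Red ∩ Σⁿ⁺¹` injectively (up to that letter) into `Red ∩ Σⁿ`, we have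
`|Red ∩ Σⁿ⁺ⁱ| ≤ |Σ|ⁱ |Red ∩ Σⁿ|`, so the density of `N` at `n` is at most
`(C + 1) ∑_{i ≤ 2C} |Σ|ⁱ` times the density of `L` at `n + i`, which tends to `0`.
-/

def factors {A : Type*} (L : Set (List A)) : Set (List A) :=
  {w | ∃ a b : List A, a ++ w ++ b ∈ L}

section Counting

variable {A : Type*}

instance finite_sphere [Finite A] (L : Set (List A)) (n : ℕ) :
    Finite {w : List A // w ∈ L ∧ w.length = n} :=
  ((List.finite_length_eq A n).subset fun _ hw => hw.2).to_subtype

lemma sphereCount_mono [Finite A] {L M : Set (List A)} (h : L ⊆ M) (n : ℕ) :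
    sphereCount L n ≤ sphereCount M n :=
  Nat.card_le_card_of_injective _ (Subtype.map_injective (f := id)
    (fun _ hw => ⟨h hw.1, hw.2⟩) Function.injective_id)

lemma sphereCount_succ_le_of_tail_mem [Fintype A] {L : Set (List A)}
    (htail : ∀ w ∈ L, w.tail ∈ L) (n : ℕ) :
    sphereCount L (n + 1) ≤ sphereCount L n * Fintype.card A := by
  rw [sphereCount, sphereCount, ← Nat.card_eq_fintype_card, ← Nat.card_prod]
  refine Nat.card_le_card_of_injective
    (fun w => (⟨w.1.tail, htail _ w.2.1, by simp [w.2.2]⟩,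
      w.1.head (List.ne_nil_of_length_eq_add_one w.2.2))) ?_
  rintro ⟨u, hu, hlu⟩ ⟨v, hv, hlv⟩ huv
  simp only [Prod.mk.injEq, Subtype.mk.injEq] at huv
  rw [Subtype.mk.injEq, ← List.cons_head_tail (List.ne_nil_of_length_eq_add_one hlu),
    ← List.cons_head_tail (List.ne_nil_of_length_eq_add_one hlv), huv.1, huv.2]

lemma sphereCount_add_le_of_tail_mem [Fintype A] {L : Set (List A)}
    (htail : ∀ w ∈ L, w.tail ∈ L) (n i : ℕ) :
    sphereCount L (n + i) ≤ sphereCount L n * Fintype.card A ^ i := by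
  induction i with
  | zero => simp
  | succ i ih =>
    calc sphereCount L (n + i + 1) ≤ sphereCount L (n + i) * Fintype.card A :=
          sphereCount_succ_le_of_tail_mem htail _
      _ ≤ sphereCount L n * Fintype.card A ^ (i + 1) := by
          rw [pow_succ, ← mul_assoc]; exact Nat.mul_le_mul_right _ ih

lemma relRatio_nonneg (L M : Set (List A)) (n : ℕ) : 0 ≤ relRatio L M n := by
  unfold relRatio; positivity

lemma relRatio_mono_left [Finite A] {L L' : Set (List A)} (h : L ⊆ L') (M : Set (List A))
    (n : ℕ) : relRatio L M n ≤ relRatio L' M n :=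
  div_le_div_of_nonneg_right (by exact_mod_cast sphereCount_mono h n) (by positivity)

lemma relRatio_le_one [Finite A] {L M : Set (List A)} (h : L ⊆ M) (n : ℕ) :
    relRatio L M n ≤ 1 :=
  div_le_one_of_le₀ (by exact_mod_cast sphereCount_mono h n) (by positivity)

-- When `M` has no word of length `n`, neither has `L`, so both sides vanish despite `x / 0 = 0`.
lemma sphereCount_eq_relRatio_mul [Finite A] {L M : Set (List A)} (h : L ⊆ M) (n : ℕ) :
    (sphereCount L n : ℝ) = relRatio L M n * sphereCount M n := by
  rcases eq_or_ne (sphereCount M n) 0 with hM0 | hM0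
  · have hL0 : sphereCount L n = 0 := Nat.eq_zero_of_le_zero (hM0 ▸ sphereCount_mono h n)
    simp [hL0, hM0]
  · exact (div_mul_cancel₀ _ (by exact_mod_cast hM0)).symm

lemma tendsto_relRatio_of_limsup_eq_zero [Finite A] {L M : Set (List A)} (h : L ⊆ M)
    (hnull : limsup (relRatio L M) atTop = 0) : Tendsto (relRatio L M) atTop (𝓝 0) := by
  have hbdd : IsBoundedUnder (· ≤ ·) atTop (relRatio L M) :=
    isBoundedUnder_of ⟨1, relRatio_le_one h⟩
  have hbdd' : IsBoundedUnder (· ≥ ·) atTop (relRatio L M) :=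
    isBoundedUnder_of ⟨0, relRatio_nonneg L M⟩
  exact tendsto_of_le_liminf_of_limsup_le
    (le_liminf_of_le hbdd.isCoboundedUnder_ge (Eventually.of_forall (relRatio_nonneg L M)))
    hnull.le hbdd hbdd'

end Counting

namespace DFA

variable {α σ : Type*} [Fintype σ] (M : DFA α σ)

theorem exists_length_le_evalFrom_eq (s : σ) (x : List α) :
    ∃ y : List α, y.length ≤ Fintype.card σ ∧ M.evalFrom s y = M.evalFrom s x := by
  induction hn : x.length using Nat.strong_induction_on generalizing x with
  | _ n ih =>
    by_cases hx : x.length ≤ Fintype.card σ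
    · exact ⟨x, hx, rfl⟩
    obtain ⟨q, a, b, c, rfl, -, hb, ha, -, hc⟩ :=
      M.evalFrom_split (s := s) (le_of_not_ge hx) rfl
    have hlt : (a ++ c).length < n := by
      have := List.length_pos_iff.mpr hb
      simp only [List.length_append] at hn ⊢
      omega
    obtain ⟨y, hy, hy_eval⟩ := ih _ hlt (a ++ c) rfl
    exact ⟨y, hy, by rw [hy_eval, evalFrom_of_append, ha, hc]⟩

theorem exists_short_context {L : Set (List α)} (hM : M.accepts = L) {w a b : List α}
    (h : a ++ w ++ b ∈ L) :
    ∃ a' b' : List α, a'.length ≤ Fintype.card σ ∧ b'.length ≤ Fintype.card σ ∧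
      a' ++ w ++ b' ∈ L := by
  obtain ⟨a', ha', ha'_eval⟩ := M.exists_length_le_evalFrom_eq M.start a
  obtain ⟨b', hb', hb'_eval⟩ :=
    M.exists_length_le_evalFrom_eq (M.evalFrom (M.evalFrom M.start a) w) b
  refine ⟨a', b', ha', hb', ?_⟩
  subst hM
  change M.eval _ ∈ M.accept at h ⊢
  simpa [eval, evalFrom_of_append, ha'_eval, hb'_eval] using h

theorem sphereCount_factors_le [Finite α] {L : Set (List α)} (hM : M.accepts = L) (n : ℕ) :
    sphereCount (factors L) n ≤
      (Fintype.card σ + 1) *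
        ∑ i ∈ Finset.range (2 * Fintype.card σ + 1), sphereCount L (n + i) := by
  set C := Fintype.card σ
  have hcard : Nat.card (Fin (C + 1) ×
      (i : Fin (2 * C + 1)) × {u : List α // u ∈ L ∧ u.length = n + i}) =
      (C + 1) * ∑ i ∈ Finset.range (2 * C + 1), sphereCount L (n + i) := by
    rw [Nat.card_prod, Nat.card_sigma, Nat.card_eq_fintype_card, Fintype.card_fin,
      ← Fin.sum_univ_eq_sum_range (fun i => sphereCount L (n + i))]
    rfl
  rw [sphereCount, ← hcard]
  choose a b ha hb hab using fun w : {w // w ∈ factors L ∧ w.length = n} =>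
    M.exists_short_context hM w.2.1.choose_spec.choose_spec
  have hread : ∀ w, ((a w ++ w.1 ++ b w).drop (a w).length).take n = w.1 := fun w => by
    rw [List.append_assoc, List.drop_left, List.take_left' w.2.2]
  refine Nat.card_le_card_of_injective (fun w =>
    (⟨(a w).length, by have := ha w; omega⟩,
      ⟨⟨(a w).length + (b w).length, by have := ha w; have := hb w; omega⟩,
        ⟨a w ++ w.1 ++ b w, hab w, by simp [w.2.2]; omega⟩⟩)) fun v w hvw => ?_
  have hlen : (a v).length = (a w).length := by simpa using congrArg (fun t => (t.1 : ℕ)) hvw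
  have hword : a v ++ v.1 ++ b v = a w ++ w.1 ++ b w := congrArg (fun t => t.2.2.1) hvw
  exact Subtype.ext (by rw [← hread v, ← hread w, hword, hlen])

end DFA

section Density

variable {A σ : Type*} [Fintype A] [Fintype σ] {L R : Set (List A)}

theorem relRatio_factors_le (M : DFA A σ) (hM : M.accepts = L) (htail : ∀ w ∈ R, w.tail ∈ R)
    (hLR : L ⊆ R) (n : ℕ) :
    relRatio (factors L) R n ≤
      (Fintype.card σ + 1) * ∑ i ∈ Finset.range (2 * Fintype.card σ + 1),
        (Fintype.card A : ℝ) ^ i * relRatio L R (n + i) := by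
  refine div_le_of_le_mul₀ (by positivity)
    (mul_nonneg (by positivity) (Finset.sum_nonneg fun i _ => by
      have := relRatio_nonneg L R (n + i); positivity)) ?_
  have hR : ∀ i, (sphereCount R (n + i) : ℝ) ≤ sphereCount R n * (Fintype.card A : ℝ) ^ i :=
    fun i => by exact_mod_cast sphereCount_add_le_of_tail_mem htail n i
  calc (sphereCount (factors L) n : ℝ)
      ≤ (Fintype.card σ + 1) * ∑ i ∈ Finset.range (2 * Fintype.card σ + 1),
          (sphereCount L (n + i) : ℝ) := by
        exact_mod_cast M.sphereCount_factors_le hM n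
    _ = (Fintype.card σ + 1) * ∑ i ∈ Finset.range (2 * Fintype.card σ + 1),
          relRatio L R (n + i) * sphereCount R (n + i) := by
        simp_rw [← sphereCount_eq_relRatio_mul hLR]
    _ ≤ (Fintype.card σ + 1) * ∑ i ∈ Finset.range (2 * Fintype.card σ + 1),
          relRatio L R (n + i) * (sphereCount R n * (Fintype.card A : ℝ) ^ i) := by
        gcongr with i
        · exact relRatio_nonneg _ _ _
        · exact hR i
    _ = _ := by
        rw [Finset.mul_sum, Finset.mul_sum, Finset.sum_mul]
        exact Finset.sum_congr rfl fun i _ => by ring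

theorem tendsto_relRatio_factors (M : DFA A σ) (hM : M.accepts = L)
    (htail : ∀ w ∈ R, w.tail ∈ R) (hLR : L ⊆ R) (h : Tendsto (relRatio L R) atTop (𝓝 0)) :
    Tendsto (relRatio (factors L) R) atTop (𝓝 0) := by
  have hsum : Tendsto (fun n => ∑ i ∈ Finset.range (2 * Fintype.card σ + 1),
      (Fintype.card A : ℝ) ^ i * relRatio L R (n + i)) atTop (𝓝 0) := by
    simpa using tendsto_finsetSum _ fun i _ =>
      (h.comp (tendsto_add_atTop_nat i)).const_mul ((Fintype.card A : ℝ) ^ i)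
  exact squeeze_zero (relRatio_nonneg _ _) (relRatio_factors_le M hM htail hLR)
    (by simpa using hsum.const_mul ((Fintype.card σ : ℝ) + 1))

end Density

lemma tail_mem_red {X : Type*} {w : List (X × Bool)} (hw : w ∈ Red X) : w.tail ∈ Red X :=
  List.IsChain.tail hw

theorem stmt12_general {X : Type*} [Fintype X]
    (L : Set (List (X × Bool))) (hL : L ⊆ Red X) (hreg : RegularLang L)
    (hnull : Filter.limsup (relRatio L (Red X)) Filter.atTop = 0) :
    Filter.limsup
      (relRatio {w | FreelyReduced w ∧ ∃ a b : List (X × Bool), a ++ w ++ b ∈ L} (Red X))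
      Filter.atTop = 0 := by
  obtain ⟨σ, _, M, hM⟩ := hreg
  have hfactors : Tendsto (relRatio (factors L) (Red X)) atTop (𝓝 0) :=
    tendsto_relRatio_factors M hM (fun _ => tail_mem_red) hL
      (tendsto_relRatio_of_limsup_eq_zero hL hnull)
  exact (squeeze_zero (relRatio_nonneg _ _)
    (relRatio_mono_left (fun _ hw => hw.2) (Red X)) hfactors).limsup_eq

/-- If a regular language `L ⊆ Red(X)` has null limsup density, so does the set `N`
of reduced words occurring as factors of words of `L`. -/
theorem stmt12 {X : Type*} [Fintype X] (hX : 2 ≤ Fintype.card X)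
    (L : Set (List (X × Bool))) (hL : L ⊆ Red X) (hreg : RegularLang L)
    (hnull : Filter.limsup (relRatio L (Red X)) Filter.atTop = 0) :
    Filter.limsup
      (relRatio {w | FreelyReduced w ∧ ∃ a b : List (X × Bool), a ++ w ++ b ∈ L} (Red X))
      Filter.atTop = 0 :=
  stmt12_general L hL hreg hnull
end

section
/- Let S be a rational subset of a nonabelian free group F with positive natural density δ(S) > 0. Then there exist k ∈ ℕ and elements a₁,...,a_k, b₁,...,b_k ∈ F such that F = ⋃_{i,j∈[k]} a_i S b_j. -/
open Filter Topology

/-- The ratio `|S ∩ B(n)| / |B(n)|` for balls of the word metric in the free group. -/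
noncomputable def ballRatio {X : Type*} [DecidableEq X] (S : Set (FreeGroup X)) (n : ℕ) : ℝ :=
  (Nat.card {g : FreeGroup X // g ∈ S ∧ (FreeGroup.toWord g).length ≤ n} : ℝ) /
    (Nat.card {g : FreeGroup X // (FreeGroup.toWord g).length ≤ n} : ℝ)

/-!
For a word `u`, let `residual S u` be the set of words `w` such that `u ++ w` is reduced and
represents an element of `S`. If `S` is the image of the language of a DFA, then `residual S u`
depends only on the set of states reached by words representing the same element as `u` and on
the last letter of `u`, so `S` has only finitely many residuals.

Either some reduced word `u` has the property that all of its reduced extensions still have a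
nonempty residual, or every reduced word has a reduced extension with empty residual. In the first
case one witness per residual gives finitely many right translates of `S` covering the cone of
`u`, and finitely many left translates of that cone cover the group; these are obtained by
inserting one letter that cancels with neither neighbour, which needs rank at least two. In the
second case, finiteness again bounds the length `B` of a dead extension uniformly, so at most
`r ^ B - 1` of the `r ^ B` extensions of length `B` of a live word stay live
(`r = 2 * |X| - 1`). Hence there are `o(r ^ n)` live words of length `n`, while the ball of
radius `n` has at least `r ^ m` elements of each length `m ≤ n`, and `S` has density zero.
-/

open Finset

theorem Set.Finite.exists_finite_witnesses {ι κ β : Type*} {s : Set ι} {t : ι → κ}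
    (ht : (t '' s).Finite) {P : ι → β → Prop}
    (hP : ∀ i ∈ s, ∀ j ∈ s, t i = t j → ∀ b, P i b → P j b) (h : ∀ i ∈ s, ∃ b, P i b) :
    ∃ T : Set β, T.Finite ∧ ∀ i ∈ s, ∃ b ∈ T, P i b := by
  choose b hb using h
  choose rep hrep_mem hrep_eq using fun k : t '' s => k.2
  have := ht.to_subtype
  refine ⟨Set.range fun k => b (rep k) (hrep_mem k), Set.finite_range _, fun i hi => ?_⟩
  let k : t '' s := ⟨t i, i, hi, rfl⟩
  exact ⟨_, ⟨k, rfl⟩, hP _ (hrep_mem k) i hi (hrep_eq k) _ (hb _ _)⟩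

theorem Set.Finite.exists_fin_iUnion_translate_eq_univ {G : Type*} [Mul G] {S C : Set G}
    (hC : C.Finite) (h : ∀ g, ∃ a ∈ C, ∃ b ∈ C, ∃ s ∈ S, a * s * b = g) :
    ∃ (k : ℕ) (a b : Fin k → G),
      (⋃ (i : Fin k) (j : Fin k), (fun s => a i * s * b j) '' S) = Set.univ := by
  obtain ⟨k, e, he⟩ := hC.fin_embedding
  refine ⟨k, e, e, Set.eq_univ_of_forall fun g => ?_⟩
  obtain ⟨a, ha, b, hb, s, hs, rfl⟩ := h g
  obtain ⟨i, rfl⟩ : a ∈ Set.range e := he ▸ ha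
  obtain ⟨j, rfl⟩ : b ∈ Set.range e := he ▸ hb
  exact Set.mem_iUnion₂.2 ⟨i, j, s, hs, rfl⟩

theorem Antitone.tendsto_zero_of_add_le_mul {q : ℕ → ℝ} (hanti : Antitone q) (hq : 0 ≤ q)
    {c : ℝ} (hc : c < 1) {D : ℕ} (h : ∀ m, q (m + D) ≤ c * q m) : Tendsto q atTop (𝓝 0) := by
  have hlim := tendsto_atTop_ciInf hanti ⟨0, by rintro _ ⟨m, rfl⟩; exact hq m⟩
  have hle : ⨅ m, q m ≤ c * ⨅ m, q m :=
    le_of_tendsto_of_tendsto' (hlim.comp (tendsto_add_atTop_nat D)) (hlim.const_mul c) h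
  have hnonneg : 0 ≤ ⨅ m, q m := le_ciInf hq
  rwa [show ⨅ m, q m = 0 by nlinarith] at hlim

theorem isLittleO_pow_of_le_mul {N : ℕ → ℕ} {r B : ℕ} (hr : 1 ≤ r)
    (h₁ : ∀ m, N (m + 1 + 1) ≤ r * N (m + 1))
    (hB : ∀ m, N (m + 1 + B) ≤ (r ^ B - 1) * N (m + 1)) :
    (fun m => (N m : ℝ)) =o[atTop] fun m => (r : ℝ) ^ m := by
  have hr₀ : (0 : ℝ) < r := by exact_mod_cast hr
  have hq : Tendsto (fun m => (N (m + 1) : ℝ) / r ^ (m + 1)) atTop (𝓝 0) := by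
    refine Antitone.tendsto_zero_of_add_le_mul (D := B) (c := ((r ^ B - 1 : ℕ) : ℝ) / r ^ B)
      (antitone_nat_of_succ_le fun m => ?_) (fun m => by positivity) ?_ fun m => ?_
    · calc (N (m + 1 + 1) : ℝ) / r ^ (m + 1 + 1) ≤ (r * N (m + 1)) / r ^ (m + 1 + 1) := by
            gcongr; exact_mod_cast h₁ m
        _ = N (m + 1) / r ^ (m + 1) := by rw [pow_succ]; field_simp
    · rw [div_lt_one (by positivity)]
      exact_mod_cast Nat.sub_lt (pow_pos hr B) one_pos
    · rw [div_mul_div_comm, ← pow_add, show m + B + 1 = m + 1 + B by ring, add_comm B]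
      gcongr
      exact_mod_cast hB m
  rw [Asymptotics.isLittleO_iff_tendsto fun m h => absurd h (by positivity)]
  exact (tendsto_add_atTop_iff_nat 1).1 hq

namespace FreeGroup

variable {α : Type*}

theorem fst_eq_imp_snd_eq_iff_ne {a b : α × Bool} :
    (a.1 = b.1 → a.2 = b.2) ↔ b ≠ (a.1, !a.2) := by
  obtain ⟨a₁, a₂⟩ := a
  obtain ⟨b₁, b₂⟩ := b
  cases a₂ <;> cases b₂ <;> simp [eq_comm]

theorem IsReduced.cons_of_append {u w : List (α × Bool)} {c : α × Bool}
    (h : IsReduced (u ++ w)) (hc : c ∈ u.getLast?) : IsReduced (c :: w) := by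
  obtain ⟨u', rfl⟩ := List.getLast?_eq_some_iff.1 hc
  exact h.infix ⟨u', [], by simp⟩

theorem IsReduced.append_of_getLast?_eq {u u' w : List (α × Bool)} (h : IsReduced (u ++ w))
    (hu' : IsReduced u') (hlast : u.getLast? = u'.getLast?) : IsReduced (u' ++ w) := by
  obtain ⟨-, hw, hjoin⟩ := List.isChain_append.1 h
  exact List.isChain_append.2 ⟨hu', hw, hlast ▸ hjoin⟩

theorem IsReduced.append_replicate_getLast {u : List (α × Bool)} (h : IsReduced u) (hu : u ≠ [])
    (k : ℕ) : IsReduced (u ++ List.replicate k (u.getLast hu)) :=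
  List.isChain_append.2 ⟨h, List.isChain_replicate_of_rel k fun _ => rfl, by
    intro a ha b hb
    rw [List.getLast?_eq_some_getLast hu, Option.mem_some_iff] at ha
    have := List.eq_of_mem_replicate (List.mem_of_mem_head? hb)
    simp_all⟩

theorem exists_isReduced_append_cons [Fintype α] (hα : 2 ≤ Fintype.card α)
    {u w : List (α × Bool)} (hu : IsReduced u) (hw : IsReduced w) :
    ∃ t, IsReduced (u ++ t :: w) := by
  classical
  let inv : α × Bool → α × Bool := fun a => (a.1, !a.2)
  have hcard : #((u.getLast?.map inv).toFinset ∪ (w.head?.map inv).toFinset) <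
      #(univ : Finset (α × Bool)) := by
    have h1 (o : Option (α × Bool)) : #o.toFinset ≤ 1 := by cases o <;> simp
    calc _ ≤ 1 + 1 := (card_union_le _ _).trans (add_le_add (h1 _) (h1 _))
      _ < _ := by rw [card_univ, Fintype.card_prod, Fintype.card_bool]; omega
  obtain ⟨t, -, ht⟩ := exists_mem_notMem_of_card_lt_card hcard
  simp only [mem_union, Option.mem_toFinset, Option.mem_map, not_or, not_exists, not_and] at ht
  refine ⟨t, List.isChain_append.2 ⟨hu, List.isChain_cons.2 ⟨fun b hb h => ?_, hw⟩,
    fun a ha b hb => ?_⟩⟩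
  · exact (fst_eq_imp_snd_eq_iff_ne.2 (Ne.symm (ht.2 b hb)) h.symm).symm
  · obtain rfl : t = b := by simpa using hb
    exact fst_eq_imp_snd_eq_iff_ne.2 (Ne.symm (ht.1 a ha))

theorem exists_norm_le_toWord_inv_mul_eq_append [Fintype α] [DecidableEq α]
    (hα : 2 ≤ Fintype.card α) {u : List (α × Bool)} (hu : IsReduced u) (g : FreeGroup α) :
    ∃ a : FreeGroup α, norm a ≤ 2 * u.length + 1 ∧ ∃ w, toWord (a⁻¹ * g) = u ++ w := by
  set n := u.length
  obtain ⟨t, ht⟩ := exists_isReduced_append_cons hα hu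
    (isReduced_toWord.infix (List.drop_suffix n g.toWord).isInfix)
  refine ⟨mk (g.toWord.take n) * (mk [t])⁻¹ * (mk u)⁻¹, ?_, t :: g.toWord.drop n, ?_⟩
  · calc _ ≤ norm (mk (g.toWord.take n)) + norm (mk [t]) + norm (mk u) := by
          grw [norm_mul_le, norm_mul_le, norm_inv_eq, norm_inv_eq]
      _ ≤ n + 1 + n := by
          gcongr
          · exact norm_mk_le.trans (by simp)
          · exact norm_mk_le
          · exact norm_mk_le
      _ = 2 * n + 1 := by ring
  · rw [← ht.reduce_eq, ← toWord_mk]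
    congr 1
    calc _ = (mk u * mk [t] * (mk (g.toWord.take n))⁻¹) *
          mk (g.toWord.take n ++ g.toWord.drop n) := by
          rw [List.take_append_drop, mk_toWord]; group
      _ = mk u * mk [t] * mk (g.toWord.drop n) := by rw [← mul_mk]; group
      _ = _ := by rw [mul_assoc, mul_mk, mul_mk, List.singleton_append]

theorem finite_setOf_length_toWord_le [Finite α] [DecidableEq α] (n : ℕ) :
    {g : FreeGroup α | g.toWord.length ≤ n}.Finite :=
  (List.finite_length_le _ n).preimage toWord_injective.injOn

def residual (S : Set (FreeGroup α)) (u : List (α × Bool)) : Set (List (α × Bool)) :=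
  {w | IsReduced (u ++ w) ∧ mk (u ++ w) ∈ S}

theorem residual_append (S : Set (FreeGroup α)) (u w : List (α × Bool)) :
    residual S (u ++ w) = (w ++ ·) ⁻¹' residual S u := by
  ext; simp [residual, List.append_assoc]

theorem IsReduced.of_mem_residual {S : Set (FreeGroup α)} {u w : List (α × Bool)}
    (h : w ∈ residual S u) : IsReduced u :=
  h.1.infix (List.prefix_append u w).isInfix

section Automaton

variable {σ : Type*} (M : DFA (α × Bool) σ)

def reachableStates (u : List (α × Bool)) : Set σ := M.eval '' {v | mk v = mk u}

theorem mem_residual_image_accepts_iff {u w : List (α × Bool)} :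
    w ∈ residual (mk '' M.accepts) u ↔ IsReduced (u ++ w) ∧
      ∃ q ∈ reachableStates M u, ∃ w', mk w' = mk w ∧ M.evalFrom q w' ∈ M.accept := by
  classical
  refine and_congr_right fun hred => ⟨?_, ?_⟩
  · rintro ⟨v, hv : M.evalFrom M.start v ∈ M.accept, hvw⟩
    have : Red v (u ++ w) := hred.reduce_eq ▸ reduce.sound hvw ▸ reduce.red
    -- a word representing the reduced word `u ++ w` reduces to it, so it splits along `u` and `w`
    obtain ⟨v₁, v₂, rfl, h₁, h₂⟩ := Red.to_append_iff.1 this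
    exact ⟨M.eval v₁, ⟨v₁, reduce.exact (reduce.eq_of_red h₁), rfl⟩, v₂,
      reduce.exact (reduce.eq_of_red h₂), by rwa [DFA.eval, ← DFA.evalFrom_of_append]⟩
  · rintro ⟨_, ⟨v, hv, rfl⟩, w', hw', hacc⟩
    refine ⟨v ++ w', show M.evalFrom M.start (v ++ w') ∈ M.accept by
      rwa [DFA.evalFrom_of_append], by
      rw [← mul_mk, ← mul_mk, hv, hw']⟩

end Automaton

theorem finite_range_residual [Finite α] {L : Set (List (α × Bool))} (hL : RegularLang L) :
    (Set.range (residual (mk '' L))).Finite := by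
  obtain ⟨σ, _, M, rfl⟩ := hL
  have : Finite σ := inferInstance
  refine (Set.finite_range fun x : Set σ × Option (α × Bool) × Prop =>
    {w : List (α × Bool) |
      (x.2.2 ∧ IsReduced w ∧ ∀ a ∈ x.2.1, ∀ b ∈ w.head?, a.1 = b.1 → a.2 = b.2) ∧
        ∃ q ∈ x.1, ∃ w', mk w' = mk w ∧ M.evalFrom q w' ∈ M.accept}).subset ?_
  rintro _ ⟨u, rfl⟩
  refine ⟨(reachableStates M u, u.getLast?, IsReduced u), ?_⟩
  ext w
  rw [Iff.comm, mem_residual_image_accepts_iff, IsReduced, List.isChain_append]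
  rfl

section Counting

open scoped Classical

variable [Fintype α]

variable (α) in
noncomputable def wordsOfLength (n : ℕ) : Finset (List (α × Bool)) :=
  (List.finite_length_eq (α × Bool) n).toFinset

@[simp]
theorem mem_wordsOfLength {n : ℕ} {w : List (α × Bool)} : w ∈ wordsOfLength α n ↔ w.length = n :=
  Set.Finite.mem_toFinset _

theorem card_filter_isReduced_cons (c : α × Bool) (d : ℕ) :
    #{w ∈ wordsOfLength α d | IsReduced (c :: w)} = (Fintype.card (α × Bool) - 1) ^ d := by
  induction d generalizing c with
  | zero =>
    rw [pow_zero, card_eq_one]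
    exact ⟨[], by ext w; simp +contextual [List.length_eq_zero_iff]⟩
  | succ d ih =>
    have : {w ∈ wordsOfLength α (d + 1) | IsReduced (c :: w)} =
        ((univ : Finset (α × Bool)).erase (c.1, !c.2)).biUnion fun a =>
          {w ∈ wordsOfLength α d | IsReduced (a :: w)}.image (a :: ·) := by
      ext (_ | ⟨a, w⟩) <;> simp [isReduced_cons_cons, fst_eq_imp_snd_eq_iff_ne]
      tauto
    rw [this, card_biUnion,
      sum_congr rfl fun a _ => (card_image_of_injective _ List.cons_injective).trans (ih a),
      sum_const, card_erase_of_mem (mem_univ _), card_univ, smul_eq_mul, pow_succ']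
    intro a _ b _ hab
    simp only [Function.onFun, disjoint_left, mem_image]
    rintro _ ⟨w, -, rfl⟩ ⟨w', -, h⟩
    exact hab (List.cons_eq_cons.1 h).1.symm

variable {P : List (α × Bool) → Prop}

theorem card_filter_wordsOfLength_add_le (hpre : ∀ u w, P (u ++ w) → P u) {m d k : ℕ}
    (hk : ∀ u, u.length = m → P u → #{w ∈ wordsOfLength α d | P (u ++ w)} ≤ k) :
    #{v ∈ wordsOfLength α (m + d) | P v} ≤ k * #{u ∈ wordsOfLength α m | P u} := by
  refine card_le_mul_card_image_of_maps_to (f := List.take m) (fun v hv => ?_) k fun u hu => ?_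
  · simp only [mem_filter, mem_wordsOfLength] at hv ⊢
    exact ⟨by simp [hv.1], hpre _ (v.drop m) (by rw [List.take_append_drop]; exact hv.2)⟩
  · simp only [mem_filter, mem_wordsOfLength] at hu
    refine (card_le_card_of_injOn (List.drop m) (fun v hv => ?_) fun v hv v' hv' h => ?_).trans
      (hk u hu.1 hu.2)
    · simp only [mem_coe, mem_filter, mem_wordsOfLength] at hv ⊢
      rw [← hv.2, List.take_append_drop]
      exact ⟨by simp [hv.1.1], hv.1.2⟩
    · simp only [mem_coe, mem_filter] at hv hv'
      rw [← List.take_append_drop m v, ← List.take_append_drop m v', h, hv.2, hv'.2]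

theorem card_filter_append_le (hred : ∀ v, P v → IsReduced v) {u : List (α × Bool)} (hu : u ≠ [])
    (d : ℕ) : #{w ∈ wordsOfLength α d | P (u ++ w)} ≤ (Fintype.card (α × Bool) - 1) ^ d := by
  rw [← card_filter_isReduced_cons (u.getLast hu)]
  refine card_le_card fun w hw => ?_
  rw [mem_filter] at hw ⊢
  exact ⟨hw.1, (hred _ hw.2).cons_of_append (List.getLast?_eq_some_getLast hu)⟩

theorem card_filter_append_lt (hred : ∀ v, P v → IsReduced v) {u w₀ : List (α × Bool)}
    (hu : u ≠ []) (hw₀ : IsReduced (u ++ w₀)) (hP : ¬P (u ++ w₀)) :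
    #{w ∈ wordsOfLength α w₀.length | P (u ++ w)} < (Fintype.card (α × Bool) - 1) ^ w₀.length := by
  rw [← card_filter_isReduced_cons (u.getLast hu)]
  have hc := List.getLast?_eq_some_getLast hu
  refine card_lt_card <| (ssubset_iff_of_subset fun w hw => ?_).2 ⟨w₀, ?_, ?_⟩
  · rw [mem_filter] at hw ⊢
    exact ⟨hw.1, (hred _ hw.2).cons_of_append hc⟩
  · exact mem_filter.2 ⟨by simp, hw₀.cons_of_append hc⟩
  · exact fun h => hP (mem_filter.1 h).2

theorem card_filter_wordsOfLength_add_le_of_escape (hred : ∀ v, P v → IsReduced v)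
    (hpre : ∀ u w, P (u ++ w) → P u) {B : ℕ}
    (hesc : ∀ u, P u → ∃ w, w.length ≤ B ∧ IsReduced (u ++ w) ∧ ¬P (u ++ w)) {m : ℕ} (hm : m ≠ 0) :
    #{v ∈ wordsOfLength α (m + B) | P v} ≤
      ((Fintype.card (α × Bool) - 1) ^ B - 1) * #{u ∈ wordsOfLength α m | P u} := by
  refine card_filter_wordsOfLength_add_le hpre fun u hum hu => ?_
  have hu₀ : u ≠ [] := by rintro rfl; exact hm hum.symm
  obtain ⟨w, hwB, hred', hw⟩ := hesc u hu
  have huw : u ++ w ≠ [] := by simp [hu₀]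
  -- pad the escaping word to length exactly `B` by repeating its last letter
  have := card_filter_append_lt hred hu₀
    (w₀ := w ++ List.replicate (B - w.length) ((u ++ w).getLast huw))
    (by rw [← List.append_assoc]; exact hred'.append_replicate_getLast huw _)
    (fun h => hw (hpre _ _ (by rwa [← List.append_assoc] at h)))
  rw [List.length_append, List.length_replicate, Nat.add_sub_cancel' hwB] at this
  omega

theorem one_le_card_prod_bool_sub_one [Nonempty α] : 1 ≤ Fintype.card (α × Bool) - 1 := by
  have := Fintype.card_pos (α := α)
  rw [Fintype.card_prod, Fintype.card_bool]
  omega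

theorem isLittleO_card_filter_wordsOfLength [Nonempty α] (hred : ∀ v, P v → IsReduced v)
    (hpre : ∀ u w, P (u ++ w) → P u) {B : ℕ}
    (hesc : ∀ u, P u → ∃ w, w.length ≤ B ∧ IsReduced (u ++ w) ∧ ¬P (u ++ w)) :
    (fun m => (#{u ∈ wordsOfLength α m | P u} : ℝ)) =o[atTop]
      fun m => ((Fintype.card (α × Bool) - 1 : ℕ) : ℝ) ^ m := by
  refine isLittleO_pow_of_le_mul one_le_card_prod_bool_sub_one (fun m => ?_)
    fun m => card_filter_wordsOfLength_add_le_of_escape hred hpre hesc (by omega)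
  exact card_filter_wordsOfLength_add_le hpre
    fun u hum _ => pow_one (Fintype.card (α × Bool) - 1) ▸
      card_filter_append_le hred (u := u) (by rintro rfl; simp at hum) 1

theorem natCard_le_sum_card_filter_wordsOfLength [DecidableEq α] {S : Set (FreeGroup α)}
    (hS : ∀ g ∈ S, P g.toWord) (n : ℕ) :
    Nat.card {g : FreeGroup α // g ∈ S ∧ g.toWord.length ≤ n} ≤
      ∑ m ∈ range (n + 1), #{u ∈ wordsOfLength α m | P u} := by
  calc _ ≤ #((range (n + 1)).biUnion fun m => {u ∈ wordsOfLength α m | P u}) := by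
        rw [← Nat.card_eq_finsetCard]
        refine Nat.card_le_card_of_injective (fun g => ⟨g.1.toWord, ?_⟩)
          fun g g' h => Subtype.ext (toWord_injective (congrArg Subtype.val h))
        simp only [mem_biUnion, mem_range, mem_filter, mem_wordsOfLength]
        exact ⟨_, Nat.lt_succ_of_le g.2.2, rfl, hS _ g.2.1⟩
    _ ≤ _ := card_biUnion_le

theorem sum_pow_le_natCard_ball [DecidableEq α] [Nonempty α] (n : ℕ) :
    ∑ m ∈ range (n + 1), (Fintype.card (α × Bool) - 1) ^ m ≤
      Nat.card {g : FreeGroup α // g.toWord.length ≤ n} := by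
  let c : α × Bool := (Classical.arbitrary α, true)
  calc _ = #((range (n + 1)).biUnion fun m => {w ∈ wordsOfLength α m | IsReduced (c :: w)}) := by
        rw [card_biUnion]
        · exact sum_congr rfl fun m _ => (card_filter_isReduced_cons c m).symm
        · intro m _ m' _ hm
          refine disjoint_filter_filter (disjoint_left.2 fun w h h' => hm ?_)
          rw [← mem_wordsOfLength.1 h, ← mem_wordsOfLength.1 h']
    _ ≤ _ := by
        rw [← Nat.card_eq_finsetCard]
        have : Finite {g : FreeGroup α // g.toWord.length ≤ n} :=
          (finite_setOf_length_toWord_le n).to_subtype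
        have hw (w : {w // w ∈ (range (n + 1)).biUnion fun m =>
            {w ∈ wordsOfLength α m | IsReduced (c :: w)}}) : (mk w.1).toWord = w.1 := by
          obtain ⟨m, -, hw⟩ := mem_biUnion.1 w.2
          exact toWord_mk.trans
            (IsReduced.reduce_eq ((mem_filter.1 hw).2.infix (List.suffix_cons c _).isInfix))
        refine Nat.card_le_card_of_injective (fun w => ⟨mk w.1, ?_⟩) fun w w' h => ?_
        · obtain ⟨m, hm, hw'⟩ := mem_biUnion.1 w.2
          rw [hw, (mem_wordsOfLength.1 (mem_filter.1 hw').1)]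
          exact Nat.le_of_lt_succ (mem_range.1 hm)
        · exact Subtype.ext
            ((hw w).symm.trans ((congrArg (toWord ∘ Subtype.val) h).trans (hw w')))

theorem tendsto_ballRatio_zero [DecidableEq α] [Nonempty α] {S : Set (FreeGroup α)}
    (hred : ∀ v, P v → IsReduced v) (hpre : ∀ u w, P (u ++ w) → P u) {B : ℕ}
    (hesc : ∀ u, P u → ∃ w, w.length ≤ B ∧ IsReduced (u ++ w) ∧ ¬P (u ++ w))
    (hS : ∀ g ∈ S, P g.toWord) : Tendsto (ballRatio S) atTop (𝓝 0) := by
  have hr : (1 : ℝ) ≤ (Fintype.card (α × Bool) - 1 : ℕ) := mod_cast one_le_card_prod_bool_sub_one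
  have hsum : Tendsto (fun n => ∑ i ∈ range n, ((Fintype.card (α × Bool) - 1 : ℕ) : ℝ) ^ i)
      atTop atTop := by
    refine tendsto_atTop_mono (fun n => ?_) tendsto_natCast_atTop_atTop
    simpa using card_nsmul_le_sum (range n) _ 1 fun i _ => one_le_pow₀ hr
  have hlo := ((isLittleO_card_filter_wordsOfLength hred hpre hesc).sum_range
    (fun m => by positivity) hsum).comp_tendsto (tendsto_add_atTop_nat 1)
  refine tendsto_of_tendsto_of_tendsto_of_le_of_le tendsto_const_nhds hlo.tendsto_div_nhds_zero
    (fun n => by unfold ballRatio; positivity) fun n => ?_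
  simp only [ballRatio, Function.comp_apply]
  refine div_le_div₀ (by positivity) ?_
    (sum_pos (fun i _ => by positivity) nonempty_range_add_one) ?_
  · exact_mod_cast natCard_le_sum_card_filter_wordsOfLength hS n
  · exact_mod_cast sum_pow_le_natCard_ball n

end Counting

theorem exists_finite_translates_cover [Fintype α] [DecidableEq α] (hα : 2 ≤ Fintype.card α)
    {S : Set (FreeGroup α)} (hS : (Set.range (residual S)).Finite) {u : List (α × Bool)}
    (hu : IsReduced u) (halive : ∀ w, IsReduced (u ++ w) → (residual S (u ++ w)).Nonempty) :
    ∃ C : Set (FreeGroup α), C.Finite ∧ ∀ g, ∃ a ∈ C, ∃ b ∈ C, ∃ s ∈ S, a * s * b = g := by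
  obtain ⟨T, hT, hwit⟩ := (hS.subset (Set.image_subset_range _ _)).exists_finite_witnesses
    (s := {u | (residual S u).Nonempty}) (P := fun u w => w ∈ residual S u)
    (fun _ _ _ _ h _ hw => h ▸ hw) fun _ hi => hi
  refine ⟨{a | a.toWord.length ≤ 2 * u.length + 1} ∪ (fun w => (mk w)⁻¹) '' T,
    (finite_setOf_length_toWord_le _).union (hT.image _), fun g => ?_⟩
  obtain ⟨a, ha, w, hw⟩ := exists_norm_le_toWord_inv_mul_eq_append hα hu g
  obtain ⟨w', hw'T, hw'⟩ := hwit _ (halive w (hw ▸ isReduced_toWord))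
  refine ⟨a, .inl ha, (mk w')⁻¹, .inr ⟨w', hw'T, rfl⟩, a⁻¹ * g * mk w', ?_, by group⟩
  rw [← hw] at hw'
  simpa [← mul_mk, mk_toWord] using hw'.2

theorem tendsto_ballRatio_zero_of_forall_exists_residual_eq_empty [Fintype α] [DecidableEq α]
    [Nonempty α] {S : Set (FreeGroup α)} (hS : (Set.range (residual S)).Finite)
    (hdead : ∀ u, IsReduced u → ∃ w, IsReduced (u ++ w) ∧ residual S (u ++ w) = ∅) :
    Tendsto (ballRatio S) atTop (𝓝 0) := by
  obtain ⟨T, hT, hwit⟩ := Set.Finite.exists_finite_witnesses (s := {u | IsReduced u})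
    (t := fun u => (residual S u, u.getLast?))
    (P := fun u w => IsReduced (u ++ w) ∧ residual S (u ++ w) = ∅)
    ((hS.prod Set.finite_univ).subset (by rintro _ ⟨u, -, rfl⟩; exact ⟨⟨u, rfl⟩, trivial⟩))
    (fun i _ j hj h w ⟨hred, hempty⟩ => by
      obtain ⟨hres, hlast⟩ := Prod.mk.injEq _ _ _ _ ▸ h
      exact ⟨hred.append_of_getLast?_eq hj hlast, by
        rw [residual_append, ← hres, ← residual_append, hempty]⟩) hdead
  obtain ⟨B, hB⟩ := (hT.image List.length).bddAbove
  refine tendsto_ballRatio_zero (P := fun u => (residual S u).Nonempty) (B := B)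
    (fun u ⟨_, hw⟩ => IsReduced.of_mem_residual hw) (fun u w ⟨w', hw'⟩ => ⟨w ++ w', ?_⟩)
    (fun u hu => ?_)
    fun g hg => ⟨[], by simpa [residual, mk_toWord] using ⟨isReduced_toWord, hg⟩⟩
  · rwa [residual_append] at hw'
  · obtain ⟨w, hwT, hred, hempty⟩ := hwit u (IsReduced.of_mem_residual hu.some_mem)
    exact ⟨w, hB ⟨w, hwT, rfl⟩, hred, by rw [hempty]; exact Set.not_nonempty_empty⟩

end FreeGroup

/-- A rational subset of a nonabelian free group with positive natural density
covers the group by finitely many two-sided translates. -/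
theorem stmt14 {X : Type*} [Fintype X] [DecidableEq X] (hX : 2 ≤ Fintype.card X)
    (S : Set (FreeGroup X))
    (hrat : ∃ L : Set (List (X × Bool)), RegularLang L ∧ FreeGroup.mk '' L = S)
    (hpos : 0 < Filter.limsup (ballRatio S) Filter.atTop) :
    ∃ (k : ℕ) (a b : Fin k → FreeGroup X),
      (⋃ (i : Fin k) (j : Fin k), (fun s => a i * s * b j) '' S) = Set.univ := by
  obtain ⟨L, hL, rfl⟩ := hrat
  have hfin := FreeGroup.finite_range_residual hL
  by_cases h : ∃ u, FreeGroup.IsReduced u ∧ ∀ w, FreeGroup.IsReduced (u ++ w) →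
      (FreeGroup.residual (FreeGroup.mk '' L) (u ++ w)).Nonempty
  · obtain ⟨u, hu, halive⟩ := h
    obtain ⟨C, hC, hcover⟩ := FreeGroup.exists_finite_translates_cover hX hfin hu halive
    exact hC.exists_fin_iUnion_translate_eq_univ hcover
  · push Not at h
    have : Nonempty X := Fintype.card_pos_iff.1 (by omega)
    have hzero := FreeGroup.tendsto_ballRatio_zero_of_forall_exists_residual_eq_empty hfin h
    exact absurd (hzero.limsup_eq ▸ hpos) (lt_irrefl 0)
end
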